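/- (Scaling lemma for item-pricing revenue) For a single unit-demand buyer with value distribution D, any achievable item-pricing allocation x with revenue R, and any scalar 0 ≤ t ≤ 1, there exists a randomized item pricing with expected allocation vector exactly t·x and expected revenue at least t·R. Consequently SRev(D, t·x) ≥ t·SRev(D, x). -/

import Mathlib

open scoped Classical

/-- `Buys v p T j` : a unit-demand buyer of type `v`, facing item prices `p` with
available item set `T`, purchases item `j` (least-index maximizer of `v k - p k` over
`T`, provided the maximum utility is nonnegative). -/
def Buys {m : ℕ} (v p : Fin m → ℝ) (T : Finset (Fin m)) (j : Fin m) : Prop :=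
  j ∈ T ∧ 0 ≤ v j - p j ∧ ∀ k ∈ T, v k - p k < v j - p j ∨ (v k - p k = v j - p j ∧ j ≤ k)

/-- Probability (over the finite-support distribution of types `V` with weights `w`)
that item `j` is sold under item pricing `p` with all items available. -/
noncomputable def allocD {m k : ℕ} (V : Fin k → Fin m → ℝ) (w : Fin k → ℝ)
    (p : Fin m → ℝ) (j : Fin m) : ℝ :=
  ∑ t, w t * (if Buys (V t) p Finset.univ j then (1 : ℝ) else 0)

/-- Expected revenue of item pricing `p` with all items available. -/
noncomputable def revD {m k : ℕ} (V : Fin k → Fin m → ℝ) (w : Fin k → ℝ)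
    (p : Fin m → ℝ) : ℝ :=
  ∑ t, w t * ∑ j, (if Buys (V t) p Finset.univ j then p j else 0)

/-- `Achievable V w x R` : some (finite-support) distribution over item pricings has
expected allocation of each item `j` at most `x j` and expected revenue `R`. -/
def Achievable {m k : ℕ} (V : Fin k → Fin m → ℝ) (w : Fin k → ℝ)
    (x : Fin m → ℝ) (R : ℝ) : Prop :=
  ∃ (l : ℕ) (β : Fin l → ℝ) (Q : Fin l → Fin m → ℝ),
    (∀ s, 0 ≤ β s) ∧ (∑ s, β s = 1) ∧
    (∀ j, ∑ s, β s * allocD V w (Q s) j ≤ x j) ∧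
    R = ∑ s, β s * revD V w (Q s)

/-- `SRev V w x` : the optimal expected revenue over distributions of item pricings
whose expected allocation vector is componentwise at most `x`. -/
noncomputable def SRev {m k : ℕ} (V : Fin k → Fin m → ℝ) (w : Fin k → ℝ)
    (x : Fin m → ℝ) : ℝ :=
  sSup {R | Achievable V w x R}

/-!
Mixing a randomized pricing (with probability `t`) with a pricing that sells nothing (with
probability `1 - t`) scales both the expected allocation and the expected revenue by exactly
`t`. Prices `1 + ∑ |V t' j|` exceed every value, so no buyer type purchases under them.
The bound on `SRev` follows since `t • {R | Achievable x R} ⊆ {R | Achievable (t • x) R}`.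
-/

open Finset
open scoped Pointwise

lemma sum_snoc_mul_comp_snoc {α : Type*} {l : ℕ} (β : Fin l → ℝ) (Q : Fin l → α)
    (t c : ℝ) (q : α) (g : α → ℝ) :
    ∑ s, Fin.snoc (α := fun _ => ℝ) (fun s => t * β s) c s * g (Fin.snoc (α := fun _ => α) Q q s)
      = t * ∑ s, β s * g (Q s) + c * g q := by
  simp only [Fin.sum_univ_castSucc, Fin.snoc_castSucc, Fin.snoc_last, mul_sum, mul_assoc]

section ItemPricing

variable {m k : ℕ} (V : Fin k → Fin m → ℝ) {w : Fin k → ℝ}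

noncomputable def prohibitivePrice : Fin m → ℝ := fun j => 1 + ∑ t', |V t' j|

lemma not_buys_prohibitivePrice (t : Fin k) (j : Fin m) :
    ¬ Buys (V t) (prohibitivePrice V) univ j := by
  rintro ⟨-, hutil, -⟩
  have hle : V t j ≤ ∑ t', |V t' j| :=
    (le_abs_self _).trans (single_le_sum (fun t' _ => abs_nonneg (V t' j)) (mem_univ t))
  simp only [prohibitivePrice] at hutil
  linarith

lemma allocD_prohibitivePrice (j : Fin m) : allocD V w (prohibitivePrice V) j = 0 :=
  sum_eq_zero fun t _ => by rw [if_neg (not_buys_prohibitivePrice V t j), mul_zero]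

lemma revD_prohibitivePrice : revD V w (prohibitivePrice V) = 0 :=
  sum_eq_zero fun t _ => by
    rw [sum_eq_zero fun j _ => if_neg (not_buys_prohibitivePrice V t j), mul_zero]

lemma allocD_nonneg (hw : ∀ t', 0 ≤ w t') (p : Fin m → ℝ) (j : Fin m) :
    0 ≤ allocD V w p j :=
  sum_nonneg fun t _ => mul_nonneg (hw t) (by positivity)

lemma revD_le_sum_max_zero (hw : ∀ t', 0 ≤ w t') (p : Fin m → ℝ) :
    revD V w p ≤ ∑ t', w t' * ∑ j, max 0 (V t' j) := by
  refine sum_le_sum fun t _ => mul_le_mul_of_nonneg_left (sum_le_sum fun j _ => ?_) (hw t)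
  split_ifs with hbuy
  · exact le_max_of_le_right (by linarith [hbuy.2.1])
  · exact le_max_left _ _

lemma exists_randomized_pricing_scaled {t : ℝ} (ht0 : 0 ≤ t) (ht1 : t ≤ 1)
    {l : ℕ} (β : Fin l → ℝ) (Q : Fin l → Fin m → ℝ) (hβ : ∀ s, 0 ≤ β s) (hβ1 : ∑ s, β s = 1) :
    ∃ (l' : ℕ) (β' : Fin l' → ℝ) (Q' : Fin l' → Fin m → ℝ),
      (∀ s, 0 ≤ β' s) ∧ (∑ s, β' s = 1) ∧
      (∀ j, ∑ s, β' s * allocD V w (Q' s) j = t * ∑ s, β s * allocD V w (Q s) j) ∧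
      ∑ s, β' s * revD V w (Q' s) = t * ∑ s, β s * revD V w (Q s) := by
  refine ⟨l + 1, Fin.snoc (fun s => t * β s) (1 - t), Fin.snoc Q (prohibitivePrice V),
    fun s => ?nonneg, ?total, fun j => ?alloc, ?rev⟩
  case nonneg =>
    refine Fin.lastCases ?_ (fun i => ?_) s
    · simpa only [Fin.snoc_last] using sub_nonneg.2 ht1
    · simpa only [Fin.snoc_castSucc] using mul_nonneg ht0 (hβ i)
  case total =>
    have h := sum_snoc_mul_comp_snoc β Q t (1 - t) (prohibitivePrice V) fun _ => 1
    simp only [mul_one] at h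
    rw [h, hβ1]
    ring
  case alloc =>
    simpa [allocD_prohibitivePrice] using
      sum_snoc_mul_comp_snoc β Q t (1 - t) (prohibitivePrice V) fun p => allocD V w p j
  case rev =>
    simpa [revD_prohibitivePrice] using
      sum_snoc_mul_comp_snoc β Q t (1 - t) (prohibitivePrice V) (revD V w)

lemma Achievable.mul {x : Fin m → ℝ} {R t : ℝ} (ht0 : 0 ≤ t) (ht1 : t ≤ 1)
    (hR : Achievable V w x R) : Achievable V w (fun j => t * x j) (t * R) := by
  obtain ⟨l, β, Q, hβ, hβ1, halloc, rfl⟩ := hR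
  obtain ⟨l', β', Q', hβ', hβ'1, halloc', hrev'⟩ :=
    exists_randomized_pricing_scaled V ht0 ht1 β Q hβ hβ1
  exact ⟨l', β', Q', hβ', hβ'1,
    fun j => (halloc' j).trans_le (mul_le_mul_of_nonneg_left (halloc j) ht0), hrev'.symm⟩

variable (hw : ∀ t', 0 ≤ w t')
include hw

lemma bddAbove_setOf_achievable (x : Fin m → ℝ) : BddAbove {R | Achievable V w x R} := by
  refine ⟨∑ t', w t' * ∑ j, max 0 (V t' j), ?_⟩
  rintro _ ⟨l, β, Q, hβ, hβ1, -, rfl⟩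
  calc ∑ s, β s * revD V w (Q s)
      ≤ ∑ s, β s * ∑ t', w t' * ∑ j, max 0 (V t' j) :=
        sum_le_sum fun s _ => mul_le_mul_of_nonneg_left (revD_le_sum_max_zero V hw (Q s)) (hβ s)
    _ = ∑ t', w t' * ∑ j, max 0 (V t' j) := by rw [← sum_mul, hβ1, one_mul]

lemma Achievable.zero {x : Fin m → ℝ} {R : ℝ} (hR : Achievable V w x R) : Achievable V w x 0 := by
  obtain ⟨l, β, Q, hβ, -, halloc, -⟩ := hR
  refine ⟨1, fun _ => 1, fun _ => prohibitivePrice V, fun _ => zero_le_one, by simp,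
    fun j => ?_, by simp [revD_prohibitivePrice]⟩
  have hx : 0 ≤ x j :=
    (sum_nonneg fun s _ => mul_nonneg (hβ s) (allocD_nonneg V hw (Q s) j)).trans (halloc j)
  simpa [allocD_prohibitivePrice] using hx

lemma SRev_nonneg (x : Fin m → ℝ) : 0 ≤ SRev V w x := by
  rcases Set.eq_empty_or_nonempty {R | Achievable V w x R} with hempty | ⟨R, hR⟩
  · rw [SRev, hempty, Real.sSup_empty]
  · exact le_csSup (bddAbove_setOf_achievable V hw x) (hR.zero V hw)

lemma mul_SRev_le_SRev_mul {t : ℝ} (ht0 : 0 ≤ t) (ht1 : t ≤ 1) (x : Fin m → ℝ) :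
    t * SRev V w x ≤ SRev V w (fun j => t * x j) := by
  have hsub : t • {R | Achievable V w x R} ⊆ {R | Achievable V w (fun j => t * x j) R} := by
    rintro _ ⟨R, hR, rfl⟩
    exact hR.mul V ht0 ht1
  rw [SRev, ← smul_eq_mul, ← Real.sSup_smul_of_nonneg ht0]
  rcases Set.eq_empty_or_nonempty (t • {R | Achievable V w x R}) with hempty | hne
  · rw [hempty, Real.sSup_empty]
    exact SRev_nonneg V hw _
  · exact csSup_le_csSup (bddAbove_setOf_achievable V hw _) hne hsub

end ItemPricing

theorem stmt13_general {m k : ℕ} (V : Fin k → Fin m → ℝ) (w : Fin k → ℝ)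
    (hw : ∀ t', 0 ≤ w t')
    (x : Fin m → ℝ) (t : ℝ) (ht : t ∈ Set.Icc (0 : ℝ) 1) :
    (∀ R : ℝ,
      (∃ (l : ℕ) (β : Fin l → ℝ) (Q : Fin l → Fin m → ℝ),
        (∀ s, 0 ≤ β s) ∧ (∑ s, β s = 1) ∧
        (∀ j, ∑ s, β s * allocD V w (Q s) j = x j) ∧
        R = ∑ s, β s * revD V w (Q s)) →
      ∃ (l' : ℕ) (β' : Fin l' → ℝ) (Q' : Fin l' → Fin m → ℝ),
        (∀ s, 0 ≤ β' s) ∧ (∑ s, β' s = 1) ∧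
        (∀ j, ∑ s, β' s * allocD V w (Q' s) j = t * x j) ∧
        t * R ≤ ∑ s, β' s * revD V w (Q' s)) ∧
    t * SRev V w x ≤ SRev V w (fun j => t * x j) := by
  obtain ⟨ht0, ht1⟩ := ht
  refine ⟨?_, mul_SRev_le_SRev_mul V hw ht0 ht1 x⟩
  rintro R ⟨l, β, Q, hβ, hβ1, halloc, rfl⟩
  obtain ⟨l', β', Q', hβ', hβ'1, halloc', hrev'⟩ :=
    exists_randomized_pricing_scaled V ht0 ht1 β Q hβ hβ1
  exact ⟨l', β', Q', hβ', hβ'1, fun j => by rw [halloc' j, halloc j], hrev'.ge⟩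

/-- scaling lemma for item-pricing revenue: if some randomized item
pricing has expected allocation vector exactly `x` and expected revenue `R`, then for
any `0 ≤ t ≤ 1` there is a randomized item pricing with expected allocation exactly
`t·x` and expected revenue at least `t·R`; consequently
`SRev(D, t·x) ≥ t·SRev(D, x)`. -/
theorem stmt13 {m k : ℕ} (V : Fin k → Fin m → ℝ) (w : Fin k → ℝ)
    (hw : ∀ t', 0 ≤ w t') (hw1 : ∑ t', w t' = 1)
    (x : Fin m → ℝ) (t : ℝ) (ht : t ∈ Set.Icc (0 : ℝ) 1) :
    (∀ R : ℝ,
      (∃ (l : ℕ) (β : Fin l → ℝ) (Q : Fin l → Fin m → ℝ),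
        (∀ s, 0 ≤ β s) ∧ (∑ s, β s = 1) ∧
        (∀ j, ∑ s, β s * allocD V w (Q s) j = x j) ∧
        R = ∑ s, β s * revD V w (Q s)) →
      ∃ (l' : ℕ) (β' : Fin l' → ℝ) (Q' : Fin l' → Fin m → ℝ),
        (∀ s, 0 ≤ β' s) ∧ (∑ s, β' s = 1) ∧
        (∀ j, ∑ s, β' s * allocD V w (Q' s) j = t * x j) ∧
        t * R ≤ ∑ s, β' s * revD V w (Q' s)) ∧
    t * SRev V w x ≤ SRev V w (fun j => t * x j) :=
  stmt13_general V w hw x t ht
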